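/- arXiv:1409.7195 — 7 statements merged into one kernel-verified Lean document; each statement's English description precedes it below -/
import Mathlib

section
/- Let P* be a right stochastic M×N matrix minimizing U(P) = Σ_i Σ_j β_i λ_i p_{ij} D_j(γ_j), where γ_j = Σ_i λ_i p_{ij}, each λ_i > 0, β_1 > β_2 > ... > β_M > 0, and each D_j is monotone increasing and continuously differentiable with strictly positive derivative. If i1 < i2 (so β_{i1} > β_{i2}) and j1 ≠ j2 are queues with p*_{i1 j1} > 0 and p*_{i2 j2} > 0, then D_{j1}(γ*_{j1}) ≤ D_{j2}(γ*_{j2}). -/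
open scoped BigOperators

/-- A right stochastic routing matrix: nonnegative entries, row sums one. -/
def IsRoutingMatrix {M N : ℕ} (P : Fin M → Fin N → ℝ) : Prop :=
  (∀ i j, 0 ≤ P i j) ∧ ∀ i, ∑ j, P i j = 1

/-- Flow into queue `j` induced by routing matrix `P`. -/
def flow {M N : ℕ} (lam : Fin M → ℝ) (P : Fin M → Fin N → ℝ) (j : Fin N) : ℝ :=
  ∑ i, lam i * P i j

/-- Social cost of routing matrix `P`. -/
def socialCost {M N : ℕ} (lam beta : Fin M → ℝ) (D : Fin N → ℝ → ℝ)
    (P : Fin M → Fin N → ℝ) : ℝ :=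
  ∑ i, ∑ j, beta i * lam i * P i j * D j (flow lam P j)

/-- Sum of a two-point function over a finite type. -/
lemma two_point_sum {K : ℕ} (k1 k2 : Fin K) (hk : k1 ≠ k2) (x y : ℝ) :
    (∑ k : Fin K, (if k = k1 then x else if k = k2 then y else 0)) = x + y := by
  have hpt : ∀ k : Fin K, (if k = k1 then x else if k = k2 then y else 0)
      = (if k = k1 then x else 0) + (if k = k2 then y else 0) := by
    intro k
    by_cases hka : k = k1
    · rw [hka]; simp [hk]
    · by_cases hkb : k = k2
      · rw [hkb]; simp [Ne.symm hk]
      · simp [hka, hkb]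
  simp only [hpt]
  rw [Finset.sum_add_distrib]
  simp [Finset.sum_ite_eq']

/-- at a social optimum, a more delay-sensitive class uses a queue
whose cost is no larger than that of any queue used by a less sensitive class. -/
theorem optimal_routing_delay_ordering_weak
    {M N : ℕ} (lam beta : Fin M → ℝ) (D : Fin N → ℝ → ℝ)
    (hlam : ∀ i, 0 < lam i)
    (hbeta_pos : ∀ i, 0 < beta i)
    (hbeta_anti : StrictAnti beta)
    (hD_mono : ∀ j, StrictMono (D j))
    (hD_smooth : ∀ j, ContDiff ℝ 1 (D j))
    (hD_deriv : ∀ j x, 0 < deriv (D j) x)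
    (Pstar : Fin M → Fin N → ℝ)
    (hPstar : IsRoutingMatrix Pstar)
    (hopt : ∀ P : Fin M → Fin N → ℝ, IsRoutingMatrix P →
      socialCost lam beta D Pstar ≤ socialCost lam beta D P)
    (i1 i2 : Fin M) (hi : i1 < i2)
    (j1 j2 : Fin N) (hj : j1 ≠ j2)
    (h1 : 0 < Pstar i1 j1) (h2 : 0 < Pstar i2 j2) :
    D j1 (flow lam Pstar j1) ≤ D j2 (flow lam Pstar j2) := by
  by_contra hcon
  push_neg at hcon
  have hi12 : i1 ≠ i2 := ne_of_lt hi
  have ha : 0 < lam i1 := hlam i1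
  have hb : 0 < lam i2 := hlam i2
  set ε : ℝ := min (Pstar i1 j1) (lam i2 / lam i1 * Pstar i2 j2) with hε
  have hεpos : 0 < ε := lt_min h1 (by positivity)
  set δ : ℝ := lam i1 / lam i2 * ε with hδ
  have hδpos : 0 < δ := by positivity
  have hbδ : lam i2 * δ = lam i1 * ε := by
    rw [hδ]; field_simp
  have hε1 : ε ≤ Pstar i1 j1 := min_le_left _ _
  have hδ2 : δ ≤ Pstar i2 j2 := by
    have h := min_le_right (Pstar i1 j1) (lam i2 / lam i1 * Pstar i2 j2)
    rw [hδ]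
    calc lam i1 / lam i2 * ε ≤ lam i1 / lam i2 * (lam i2 / lam i1 * Pstar i2 j2) := by
          apply mul_le_mul_of_nonneg_left h (by positivity)
      _ = Pstar i2 j2 := by field_simp
  -- the perturbation
  set q : Fin M → Fin N → ℝ := fun i j =>
    if i = i1 then (if j = j1 then -ε else if j = j2 then ε else 0)
    else if i = i2 then (if j = j1 then δ else if j = j2 then -δ else 0)
    else 0 with hq
  set P' : Fin M → Fin N → ℝ := fun i j => Pstar i j + q i j with hP'
  -- values of q
  have hq1 : ∀ j, q i1 j = if j = j1 then -ε else if j = j2 then ε else 0 := by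
    intro j; simp [hq]
  have hq2 : ∀ j, q i2 j = if j = j1 then δ else if j = j2 then -δ else 0 := by
    intro j; simp [hq, Ne.symm hi12]
  have hqo : ∀ i, i ≠ i1 → i ≠ i2 → ∀ j, q i j = 0 := by
    intro i hia hib j; simp [hq, hia, hib]
  -- flows unchanged
  have hflow : ∀ j, flow lam P' j = flow lam Pstar j := by
    intro j
    have hsplit : flow lam P' j = flow lam Pstar j + ∑ i, lam i * q i j := by
      simp only [flow, hP']
      rw [← Finset.sum_add_distrib]
      congr 1; ext i; ring
    rw [hsplit]
    have hpt : ∀ i, lam i * q i j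
        = if i = i1 then lam i1 * (if j = j1 then -ε else if j = j2 then ε else 0)
          else if i = i2 then lam i2 * (if j = j1 then δ else if j = j2 then -δ else 0) else 0 := by
      intro i
      by_cases hia : i = i1
      · rw [hia, if_pos rfl, hq1]
      · by_cases hib : i = i2
        · rw [hib, if_neg (Ne.symm hi12), if_pos rfl, hq2]
        · rw [if_neg hia, if_neg hib, hqo i hia hib j, mul_zero]
    have hz : (∑ i, lam i * q i j) = 0 := by
      simp only [hpt]
      rw [two_point_sum i1 i2 hi12]
      by_cases hja : j = j1
      · rw [hja]
        simp only [if_pos rfl, if_true, eq_self_iff_true]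
        linarith [hbδ]
      · by_cases hjb : j = j2
        · rw [hjb]
          simp only [if_neg (Ne.symm hj), if_pos rfl, if_true, eq_self_iff_true]
          linarith [hbδ]
        · simp [hja, hjb]
    rw [hz, add_zero]
  -- P' is a routing matrix
  have hP'routing : IsRoutingMatrix P' := by
    constructor
    · intro i j
      simp only [hP']
      by_cases hia : i = i1
      · rw [hia, hq1 j]
        by_cases hja : j = j1
        · rw [hja, if_pos rfl]; linarith
        · by_cases hjb : j = j2
          · rw [if_neg hja, if_pos hjb]
            have := hPstar.1 i1 j; linarith
          · rw [if_neg hja, if_neg hjb]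
            have := hPstar.1 i1 j; linarith
      · by_cases hib : i = i2
        · rw [hib, hq2 j]
          by_cases hja : j = j1
          · rw [if_pos hja]
            have := hPstar.1 i2 j; linarith
          · by_cases hjb : j = j2
            · rw [hjb, if_neg (Ne.symm hj), if_pos rfl]; linarith
            · rw [if_neg hja, if_neg hjb]
              have := hPstar.1 i2 j; linarith
        · rw [hqo i hia hib j, add_zero]
          exact hPstar.1 i j
    · intro i
      have hsplit : (∑ j, P' i j) = (∑ j, Pstar i j) + ∑ j, q i j := by
        simp only [hP']; rw [Finset.sum_add_distrib]
      rw [hsplit, hPstar.2 i]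
      have hz : (∑ j, q i j) = 0 := by
        by_cases hia : i = i1
        · rw [hia]
          simp only [hq1]
          rw [two_point_sum j1 j2 hj]; ring
        · by_cases hib : i = i2
          · rw [hib]
            simp only [hq2]
            rw [two_point_sum j1 j2 hj]; ring
          · simp [hqo i hia hib]
      rw [hz, add_zero]
  -- cost of P'
  have hcost : socialCost lam beta D P'
      = socialCost lam beta D Pstar
        + (beta i1 * lam i1 * ε * (D j2 (flow lam Pstar j2) - D j1 (flow lam Pstar j1))
           + beta i2 * lam i2 * δ * (D j1 (flow lam Pstar j1) - D j2 (flow lam Pstar j2))) := by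
    simp only [socialCost]
    have hrw : ∀ i j, beta i * lam i * P' i j * D j (flow lam P' j)
        = beta i * lam i * Pstar i j * D j (flow lam Pstar j)
          + beta i * lam i * q i j * D j (flow lam Pstar j) := by
      intro i j
      rw [hflow j]
      simp only [hP']; ring
    simp only [hrw]
    have hsplit : (∑ i : Fin M, ∑ j : Fin N,
        (beta i * lam i * Pstar i j * D j (flow lam Pstar j)
          + beta i * lam i * q i j * D j (flow lam Pstar j)))
        = (∑ i, ∑ j, beta i * lam i * Pstar i j * D j (flow lam Pstar j))
          + ∑ i, ∑ j, beta i * lam i * q i j * D j (flow lam Pstar j) := by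
      rw [← Finset.sum_add_distrib]
      apply Finset.sum_congr rfl
      intro i _
      rw [← Finset.sum_add_distrib]
    rw [hsplit]
    congr 1
    have hin1 : (∑ j, beta i1 * lam i1 * q i1 j * D j (flow lam Pstar j))
        = beta i1 * lam i1 * ε * (D j2 (flow lam Pstar j2) - D j1 (flow lam Pstar j1)) := by
      have hpt : ∀ j, beta i1 * lam i1 * q i1 j * D j (flow lam Pstar j)
          = if j = j1 then beta i1 * lam i1 * (-ε) * D j1 (flow lam Pstar j1)
            else if j = j2 then beta i1 * lam i1 * ε * D j2 (flow lam Pstar j2) else 0 := by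
        intro j
        rw [hq1]
        by_cases hja : j = j1
        · rw [hja]; simp [Ne.symm hj]
        · by_cases hjb : j = j2
          · rw [hjb]; simp [Ne.symm hj]
          · simp [hja, hjb]
      simp only [hpt]
      rw [two_point_sum j1 j2 hj]; ring
    have hin2 : (∑ j, beta i2 * lam i2 * q i2 j * D j (flow lam Pstar j))
        = beta i2 * lam i2 * δ * (D j1 (flow lam Pstar j1) - D j2 (flow lam Pstar j2)) := by
      have hpt : ∀ j, beta i2 * lam i2 * q i2 j * D j (flow lam Pstar j)
          = if j = j1 then beta i2 * lam i2 * δ * D j1 (flow lam Pstar j1)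
            else if j = j2 then beta i2 * lam i2 * (-δ) * D j2 (flow lam Pstar j2) else 0 := by
        intro j
        rw [hq2]
        by_cases hja : j = j1
        · rw [hja]; simp [Ne.symm hj]
        · by_cases hjb : j = j2
          · rw [hjb]; simp [Ne.symm hj]
          · simp [hja, hjb]
      simp only [hpt]
      rw [two_point_sum j1 j2 hj]; ring
    have hptI : ∀ i, (∑ j, beta i * lam i * q i j * D j (flow lam Pstar j))
        = if i = i1 then beta i1 * lam i1 * ε * (D j2 (flow lam Pstar j2) - D j1 (flow lam Pstar j1))
          else if i = i2 then beta i2 * lam i2 * δ * (D j1 (flow lam Pstar j1) - D j2 (flow lam Pstar j2)) else 0 := by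
      intro i
      by_cases hia : i = i1
      · rw [hia, if_pos rfl]; exact hin1
      · by_cases hib : i = i2
        · rw [hib, if_neg (Ne.symm hi12), if_pos rfl]; exact hin2
        · rw [if_neg hia, if_neg hib]
          apply Finset.sum_eq_zero
          intro j _
          rw [hqo i hia hib j]; ring
    simp only [hptI]
    rw [two_point_sum i1 i2 hi12]
  -- the perturbation strictly reduces cost: contradiction
  have hβ : beta i2 < beta i1 := hbeta_anti hi
  have hneg : beta i1 * lam i1 * ε * (D j2 (flow lam Pstar j2) - D j1 (flow lam Pstar j1))
      + beta i2 * lam i2 * δ * (D j1 (flow lam Pstar j1) - D j2 (flow lam Pstar j2)) < 0 := by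
    have h12 : D j2 (flow lam Pstar j2) - D j1 (flow lam Pstar j1) < 0 := by linarith
    have heq : beta i1 * lam i1 * ε * (D j2 (flow lam Pstar j2) - D j1 (flow lam Pstar j1))
        + beta i2 * lam i2 * δ * (D j1 (flow lam Pstar j1) - D j2 (flow lam Pstar j2))
        = (beta i1 - beta i2) * (lam i1 * ε)
            * (D j2 (flow lam Pstar j2) - D j1 (flow lam Pstar j1)) := by
      rw [show beta i2 * lam i2 * δ * (D j1 (flow lam Pstar j1) - D j2 (flow lam Pstar j2))
          = beta i2 * (lam i2 * δ) * (D j1 (flow lam Pstar j1) - D j2 (flow lam Pstar j2)) by ring,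
        hbδ]
      ring
    rw [heq]
    exact mul_neg_of_pos_of_neg (mul_pos (by linarith) (mul_pos ha hεpos)) h12
  have hle := hopt P' hP'routing
  rw [hcost] at hle
  linarith
end

section
/- Assume the strict-ordering property: for any optimal P*, whenever classes i1 < i2 use distinct queues j1, j2 respectively (p*_{i1 j1} > 0, p*_{i2 j2} > 0), we have D_{j1}(γ*_{j1}) < D_{j2}(γ*_{j2}). Then, after reordering queues so that D_1(γ*_1) ≤ D_2(γ*_2) ≤ ... ≤ D_N(γ*_N), there exist indices 1 ≤ n_1 ≤ n_2 ≤ ... ≤ n_M ≤ N such that p*_{ij} = 0 whenever j ∉ {n_{i−1}, ..., n_i} (with n_0 = 1). In other words, each class uses a consecutive block of queues in the delay ordering, and consecutive blocks overlap in at most one queue. -/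
set_option maxHeartbeats 1000000


open scoped BigOperators

/-- if whenever classes `i1 < i2` use distinct queues `j1, j2` we have
`D_{j1}(γ*_{j1}) < D_{j2}(γ*_{j2})`, and the queues are sorted in nondecreasing
order of delay, then each class uses a consecutive block of queues (class `i`,
counted from 1, uses only queues with 1-based index in `[n_{i-1}, n_i]`, `n_0 = 1`). -/
theorem optimal_routing_block_structure
    {M N : ℕ} (lam : Fin M → ℝ) (D : Fin N → ℝ → ℝ)
    (Pstar : Fin M → Fin N → ℝ)
    (hPstar : IsRoutingMatrix Pstar)
    (hstrict : ∀ (i1 i2 : Fin M), i1 < i2 → ∀ (j1 j2 : Fin N), j1 ≠ j2 →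
      0 < Pstar i1 j1 → 0 < Pstar i2 j2 →
      D j1 (flow lam Pstar j1) < D j2 (flow lam Pstar j2))
    (hsorted : ∀ (j j' : Fin N), j ≤ j' →
      D j (flow lam Pstar j) ≤ D j' (flow lam Pstar j')) :
    ∃ n : ℕ → ℕ, n 0 = 1 ∧ (∀ k, n k ≤ n (k + 1)) ∧
      (∀ k, 1 ≤ k → k ≤ M → 1 ≤ n k ∧ n k ≤ N) ∧
      (∀ (i : Fin M) (j : Fin N),
        (j.val + 1 < n i.val ∨ n (i.val + 1) < j.val + 1) → Pstar i j = 0) := by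
  obtain ⟨hnn, hrow⟩ := hPstar
  rcases Nat.eq_zero_or_pos M with hM | hM
  · refine ⟨fun _ => 1, rfl, fun _ => le_rfl, ?_, ?_⟩
    · intro k hk hkM; omega
    · intro i; exact absurd i.isLt (by omega)
  -- M > 0
  -- the "used" set of each class, nonempty
  set S : Fin M → Finset (Fin N) := fun i => Finset.univ.filter (fun j => 0 < Pstar i j)
    with hS
  have hSne : ∀ i, (S i).Nonempty := by
    intro i
    by_contra h
    rw [Finset.not_nonempty_iff_eq_empty] at h
    have hz : ∀ j, Pstar i j = 0 := by
      intro j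
      by_contra hpj
      have : j ∈ S i := by
        simp only [hS, Finset.mem_filter, Finset.mem_univ, true_and]
        exact lt_of_le_of_ne (hnn i j) (Ne.symm hpj)
      rw [h] at this; exact absurd this (Finset.notMem_empty j)
    have := hrow i
    rw [Finset.sum_congr rfl (fun j _ => hz j)] at this
    simp at this
  -- key: queues used by an earlier class are ≤ queues used by a later class
  have key : ∀ i1 i2 : Fin M, i1 < i2 → ∀ j1 ∈ S i1, ∀ j2 ∈ S i2, j1 ≤ j2 := by
    intro i1 i2 h12 j1 hj1 j2 hj2
    simp only [hS, Finset.mem_filter, Finset.mem_univ, true_and] at hj1 hj2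
    by_contra hle
    have h21 : j2 < j1 := lt_of_not_ge hle
    have hne : j1 ≠ j2 := fun h => absurd h.symm (ne_of_lt h21)
    have h1 := hstrict i1 i2 h12 j1 j2 hne hj1 hj2
    have h2 := hsorted j2 j1 (le_of_lt h21)
    linarith
  set b : Fin M → Fin N := fun i => (S i).max' (hSne i) with hb
  have hbmem : ∀ i, b i ∈ S i := fun i => (S i).max'_mem (hSne i)
  have hbmono : ∀ i1 i2 : Fin M, i1 ≤ i2 → b i1 ≤ b i2 := by
    intro i1 i2 h
    rcases lt_or_eq_of_le h with h | h
    · exact key i1 i2 h (b i1) (hbmem i1) (b i2) (hbmem i2)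
    · rw [h]
  refine ⟨fun k => if k = 0 then 1 else (b ⟨min (k - 1) (M - 1), by omega⟩).val + 1,
    rfl, ?_, ?_, ?_⟩
  · intro k
    rcases Nat.eq_zero_or_pos k with hk | hk
    · subst hk; simp
    · show (if k = 0 then 1 else (b ⟨min (k - 1) (M - 1), by omega⟩).val + 1) ≤
        (if k + 1 = 0 then 1 else (b ⟨min (k + 1 - 1) (M - 1), by omega⟩).val + 1)
      rw [if_neg (by omega : k ≠ 0), if_neg (by omega : k + 1 ≠ 0)]
      have : (⟨min (k - 1) (M - 1), by omega⟩ : Fin M) ≤ ⟨min (k + 1 - 1) (M - 1), by omega⟩ := by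
        simp only [Fin.mk_le_mk]; omega
      have := hbmono _ _ this
      omega
  · intro k hk hkM
    show 1 ≤ (if k = 0 then 1 else (b ⟨min (k - 1) (M - 1), by omega⟩).val + 1) ∧
      (if k = 0 then 1 else (b ⟨min (k - 1) (M - 1), by omega⟩).val + 1) ≤ N
    rw [if_neg (by omega : k ≠ 0)]
    refine ⟨by omega, ?_⟩
    have := (b ⟨min (k - 1) (M - 1), by omega⟩).isLt
    omega
  · intro i j hj
    by_contra hp
    have hpos : 0 < Pstar i j := lt_of_le_of_ne (hnn i j) (Ne.symm hp)
    have hjS : j ∈ S i := by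
      simp only [hS, Finset.mem_filter, Finset.mem_univ, true_and]; exact hpos
    dsimp only at hj
    rcases hj with hj | hj
    · -- j + 1 < n i.val : need i.val ≠ 0
      rcases Nat.eq_zero_or_pos i.val with h0 | h0
      · rw [h0, if_pos rfl] at hj; omega
      · rw [if_neg (by omega : i.val ≠ 0)] at hj
        set i' : Fin M := ⟨min (i.val - 1) (M - 1), by omega⟩ with hi'
        have hmin : i'.val = i.val - 1 := by
          simp only [hi']; have := i.isLt; omega
        have hi'lt : i' < i := by
          rw [Fin.lt_def, hmin]; omega
        have := key i' i hi'lt (b i') (hbmem i') j hjS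
        rw [Fin.le_def] at this
        omega
    · -- n (i.val + 1) < j + 1
      rw [if_neg (by omega : i.val + 1 ≠ 0)] at hj
      set i' : Fin M := ⟨min (i.val + 1 - 1) (M - 1), by omega⟩ with hi'
      have : i' = i := by
        apply Fin.ext
        simp only [hi']; have := i.isLt; omega
      rw [this] at hj
      have h2 : j ≤ b i := (S i).le_max' j hjS
      rw [Fin.le_def] at h2
      omega
end

section
/- The social cost function is not convex in the two-class, two-queue M/M/1 example: let 0 < λ_1, 0 < λ_2, λ_1 + λ_2 < 1, β_1 > β_2 > 0, and define on [0,1]² the function U(p_1, p_2) = (p_1 λ_1 β_1 + p_2 λ_2 β_2)(D(γ_1) − D(γ_2)) + (λ_1 β_1 + λ_2 β_2) D(γ_2), where γ_1 = λ_1 p_1 + λ_2 p_2, γ_2 = λ_1(1−p_1) + λ_2(1−p_2), and D(γ) = 1/(1−γ). Then U is not a convex function on the open square (0,1)². -/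
lemma key_ineq (a ε δ K c0 : ℝ) (hε : 0 < ε) (hea : ε < a) (hlt : K*ε < 2*a*δ) :
    (1/2) * ((c0+δ)*(1/(a+ε) - 1/(a-ε)) + K*(1/(a-ε)))
  + (1/2) * ((c0-δ)*(1/(a-ε) - 1/(a+ε)) + K*(1/(a+ε))) < K * (1/a) := by
  have h1 : 0 < a - ε := by linarith
  have h2 : 0 < a + ε := by linarith
  have h3 : 0 < a := by linarith
  have key : (1/2) * ((c0+δ)*(1/(a+ε) - 1/(a-ε)) + K*(1/(a-ε)))
     + (1/2) * ((c0-δ)*(1/(a-ε) - 1/(a+ε)) + K*(1/(a+ε))) = (K*a - 2*δ*ε)/((a+ε)*(a-ε)) := by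
    field_simp; ring
  rw [key, show K * (1/a) = K/a by ring, div_lt_div_iff₀ (by positivity) h3]
  nlinarith [mul_lt_mul_of_pos_right hlt hε]

/-- in the two-class two-queue M/M/1 example the social cost
function is not convex on the open unit square. -/
theorem social_cost_not_convex
    (lam1 lam2 beta1 beta2 : ℝ)
    (hlam1 : 0 < lam1) (hlam2 : 0 < lam2) (hstab : lam1 + lam2 < 1)
    (hbeta : beta1 > beta2) (hbeta2 : beta2 > 0)
    (D : ℝ → ℝ) (hD : ∀ g, D g = 1 / (1 - g))
    (U : ℝ × ℝ → ℝ)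
    (hU : ∀ p : ℝ × ℝ,
      U p = (p.1 * lam1 * beta1 + p.2 * lam2 * beta2) *
              (D (lam1 * p.1 + lam2 * p.2) -
               D (lam1 * (1 - p.1) + lam2 * (1 - p.2))) +
            (lam1 * beta1 + lam2 * beta2) *
              D (lam1 * (1 - p.1) + lam2 * (1 - p.2))) :
    ¬ ConvexOn ℝ (Set.Ioo (0:ℝ) 1 ×ˢ Set.Ioo (0:ℝ) 1) U := by
  intro h
  set K := lam1*beta1 + lam2*beta2 with hKdef
  have hKpos : 0 < K := by rw [hKdef]; nlinarith
  clear_value K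
  set a := 1 - (lam1+lam2)/2 with hadef
  have ha : 0 < a := by rw [hadef]; linarith
  clear_value a
  have hden : 0 < K + 2*a*beta2 := by nlinarith [mul_pos ha hbeta2]
  set u := a*(beta1-beta2)/(K+2*a*beta2) with hudef
  have hu : 0 < u := by rw [hudef]; exact div_pos (by nlinarith) hden
  have huK : u*(K+2*a*beta2) = a*(beta1-beta2) := by rw [hudef]; field_simp
  clear_value u
  set t := 1 + u with htdef
  have ht0 : 0 < t := by rw [htdef]; linarith
  clear_value t
  set s := min (1/4 : ℝ) (min (lam2/(4*lam1*t)) (a/(2*lam1*u))) with hsdef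
  have hs0 : 0 < s := by
    rw [hsdef]
    exact lt_min (by norm_num) (lt_min (div_pos hlam2 (by positivity)) (div_pos ha (by positivity)))
  have hs4 : s ≤ 1/4 := by rw [hsdef]; exact min_le_left _ _
  have hs2 : s ≤ lam2/(4*lam1*t) := by
    rw [hsdef]; exact le_trans (min_le_right _ _) (min_le_left _ _)
  have hs3 : s ≤ a/(2*lam1*u) := by
    rw [hsdef]; exact le_trans (min_le_right _ _) (min_le_right _ _)
  clear_value s
  set r := s*lam1*t/lam2 with hrdef
  have hr0 : 0 < r := by
    rw [hrdef]; exact div_pos (mul_pos (mul_pos hs0 hlam1) ht0) hlam2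
  have hrl : r*lam2 = s*lam1*t := by rw [hrdef]; field_simp
  have hr4 : r ≤ 1/4 := by
    have h1 : s*(4*lam1*t) ≤ lam2 := (le_div_iff₀ (by positivity)).mp hs2
    rw [hrdef, div_le_iff₀ hlam2]; linarith [h1]
  clear_value r
  set ε := s*lam1*u with hedef
  have hε : 0 < ε := by rw [hedef]; exact mul_pos (mul_pos hs0 hlam1) hu
  have hεa : ε < a := by
    have h1 : s*(2*lam1*u) ≤ a := (le_div_iff₀ (by positivity)).mp hs3
    rw [hedef]; linarith [h1, mul_pos (mul_pos hs0 hlam1) hu]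
  clear_value ε
  have h6 : u*beta2*(K+2*a*beta2) = a*beta2*(beta1-beta2) := by linear_combination beta2 * huK
  have hub : u*beta2 < beta1 - beta2 := by
    have h8 : (0:ℝ) < (beta1-beta2)*(K+a*beta2) := by
      have : (0:ℝ) < K + a*beta2 := by nlinarith [mul_pos ha hbeta2]
      exact mul_pos (sub_pos.2 hbeta) this
    have h9 : (K+2*a*beta2)*(beta1 - beta2 - u*beta2) = (beta1-beta2)*(K+a*beta2) := by
      linear_combination (-1 : ℝ) * h6
    have h10 : (0:ℝ) < (K+2*a*beta2)*(beta1 - beta2 - u*beta2) := h9 ▸ h8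
    have := (mul_pos_iff_of_pos_left hden).mp h10
    linarith
  have hbt : t*beta2 < beta1 := by rw [htdef]; linarith [hub]
  set δ := s*lam1*(beta1 - t*beta2) with hddef
  clear_value δ
  have hδ : 0 < δ := by rw [hddef]; exact mul_pos (mul_pos hs0 hlam1) (by linarith)
  have h7 : u*K < 2*a*(beta1 - t*beta2) := by
    rw [htdef]; linarith [huK, mul_pos ha (sub_pos.2 hbeta)]
  have hkey : K*ε < 2*a*δ := by
    rw [hedef, hddef]; linarith [mul_lt_mul_of_pos_left h7 (mul_pos hs0 hlam1)]
  -- membership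
  have hA : (((1:ℝ)/2 + s, (1:ℝ)/2 - r)) ∈ Set.Ioo (0:ℝ) 1 ×ˢ Set.Ioo (0:ℝ) 1 := by
    simp only [Set.mem_prod, Set.mem_Ioo]
    refine ⟨⟨by linarith, by linarith⟩, by linarith, by linarith⟩
  have hB : (((1:ℝ)/2 - s, (1:ℝ)/2 + r)) ∈ Set.Ioo (0:ℝ) 1 ×ˢ Set.Ioo (0:ℝ) 1 := by
    simp only [Set.mem_prod, Set.mem_Ioo]
    refine ⟨⟨by linarith, by linarith⟩, by linarith, by linarith⟩
  have hmain := h.2 hA hB (by norm_num : (0:ℝ) ≤ 1/2) (by norm_num : (0:ℝ) ≤ 1/2)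
    (by norm_num : (1:ℝ)/2 + 1/2 = 1)
  have hmid : ((1:ℝ)/2) • (((1:ℝ)/2 + s, (1:ℝ)/2 - r)) + ((1:ℝ)/2) • (((1:ℝ)/2 - s, (1:ℝ)/2 + r))
      = (((1:ℝ)/2, (1:ℝ)/2)) := by
    simp only [Prod.smul_mk, Prod.mk_add_mk, Prod.mk.injEq, smul_eq_mul]
    constructor <;> ring
  rw [hmid] at hmain
  -- evaluate U at the three points
  have e1 : U ((1:ℝ)/2, (1:ℝ)/2) = K * (1/a) := by
    rw [hU]
    show ((1:ℝ)/2 * lam1 * beta1 + (1:ℝ)/2 * lam2 * beta2) *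
          (D (lam1 * (1/2) + lam2 * (1/2)) - D (lam1 * (1 - 1/2) + lam2 * (1 - 1/2))) +
        K * D (lam1 * (1 - 1/2) + lam2 * (1 - 1/2)) = K * (1/a)
    rw [hD, hD, show (1:ℝ) - (lam1 * (1/2) + lam2 * (1/2)) = a by rw [hadef]; ring,
        show (1:ℝ) - (lam1 * (1 - 1/2) + lam2 * (1 - 1/2)) = a by rw [hadef]; ring]
    ring
  have e2 : U ((1:ℝ)/2 + s, (1:ℝ)/2 - r)
      = (K/2 + δ)*(1/(a+ε) - 1/(a-ε)) + K*(1/(a-ε)) := by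
    rw [hU]
    show (((1:ℝ)/2 + s) * lam1 * beta1 + ((1:ℝ)/2 - r) * lam2 * beta2) *
          (D (lam1 * (1/2 + s) + lam2 * (1/2 - r)) -
           D (lam1 * (1 - (1/2 + s)) + lam2 * (1 - (1/2 - r)))) +
        K * D (lam1 * (1 - (1/2 + s)) + lam2 * (1 - (1/2 - r))) = _
    rw [hD, hD,
      show (1:ℝ) - (lam1 * (1/2 + s) + lam2 * (1/2 - r)) = a + ε by
        rw [hadef, hedef]; linear_combination hrl + s*lam1*htdef,
      show (1:ℝ) - (lam1 * (1 - (1/2 + s)) + lam2 * (1 - (1/2 - r))) = a - ε by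
        rw [hadef, hedef]; linear_combination - hrl - s*lam1*htdef,
      show ((1:ℝ)/2 + s) * lam1 * beta1 + ((1:ℝ)/2 - r) * lam2 * beta2 = K/2 + δ by
        rw [hKdef, hddef]; linear_combination - beta2*hrl]
  have e3 : U ((1:ℝ)/2 - s, (1:ℝ)/2 + r)
      = (K/2 - δ)*(1/(a-ε) - 1/(a+ε)) + K*(1/(a+ε)) := by
    rw [hU]
    show (((1:ℝ)/2 - s) * lam1 * beta1 + ((1:ℝ)/2 + r) * lam2 * beta2) *
          (D (lam1 * (1/2 - s) + lam2 * (1/2 + r)) -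
           D (lam1 * (1 - (1/2 - s)) + lam2 * (1 - (1/2 + r)))) +
        K * D (lam1 * (1 - (1/2 - s)) + lam2 * (1 - (1/2 + r))) = _
    rw [hD, hD,
      show (1:ℝ) - (lam1 * (1/2 - s) + lam2 * (1/2 + r)) = a - ε by
        rw [hadef, hedef]; linear_combination - hrl - s*lam1*htdef,
      show (1:ℝ) - (lam1 * (1 - (1/2 - s)) + lam2 * (1 - (1/2 + r))) = a + ε by
        rw [hadef, hedef]; linear_combination hrl + s*lam1*htdef,
      show ((1:ℝ)/2 - s) * lam1 * beta1 + ((1:ℝ)/2 + r) * lam2 * beta2 = K/2 - δ by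
        rw [hKdef, hddef]; linear_combination beta2*hrl]
  rw [e1, e2, e3, smul_eq_mul, smul_eq_mul] at hmain
  have := key_ineq a ε δ K (K/2) hε hεa hkey
  linarith
end

section
/- In the two-class two-queue M/M/1 example with λ_1 + λ_2 < 1, the gradient of U(p_1, p_2) vanishes at (1/2, 1/2): both partial derivatives ∂U/∂p_1 and ∂U/∂p_2 are zero at p_1 = p_2 = 1/2. -/
/-! At `p = (1/2, 1/2)` both queues carry the same load `(λ₁ + λ₂) / 2`, so the two delay terms
coincide and the derivative of the difference `D(γ₁) - D(γ₂)` is `2 λᵢ D'(γ)`. The product rule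
then leaves `λᵢ D'(γ) (2 A - B)`, where `A = (λ₁β₁ + λ₂β₂) / 2` is the weight in front of that
difference and `B = λ₁β₁ + λ₂β₂`; this vanishes for any delay function `D` differentiable at `γ`. -/

theorem hasDerivAt_split_cost_eq_zero {A γ₁ γ₂ D : ℝ → ℝ} {a l B x : ℝ}
    (hA : HasDerivAt A a x) (hγ₁ : HasDerivAt γ₁ l x) (hγ₂ : HasDerivAt γ₂ (-l) x)
    (hγ : γ₁ x = γ₂ x) (hD : DifferentiableAt ℝ D (γ₁ x)) (hB : 2 * A x = B) :
    HasDerivAt (fun p => A p * (D (γ₁ p) - D (γ₂ p)) + B * D (γ₂ p)) 0 x := by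
  have hD₁ := hD.hasDerivAt.comp x hγ₁
  have hD₂ := (hγ ▸ hD).hasDerivAt.comp x hγ₂
  refine ((hA.mul (hD₁.sub hD₂)).add (hD₂.const_mul B)).congr_deriv ?_
  simp only [Pi.sub_apply, Function.comp_apply, ← hγ, ← hB]
  ring

theorem social_cost_gradient_zero_at_half_general
    (lam1 lam2 beta1 beta2 : ℝ)
    (hstab : lam1 + lam2 < 1)
    (D : ℝ → ℝ) (hD : ∀ g, D g = 1 / (1 - g))
    (U : ℝ → ℝ → ℝ)
    (hU : ∀ p1 p2 : ℝ,
      U p1 p2 = (p1 * lam1 * beta1 + p2 * lam2 * beta2) *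
              (D (lam1 * p1 + lam2 * p2) -
               D (lam1 * (1 - p1) + lam2 * (1 - p2))) +
            (lam1 * beta1 + lam2 * beta2) *
              D (lam1 * (1 - p1) + lam2 * (1 - p2))) :
    HasDerivAt (fun p1 => U p1 (1/2)) 0 (1/2) ∧
    HasDerivAt (fun p2 => U (1/2) p2) 0 (1/2) := by
  have hD_diff : ∀ g, g ≠ 1 → DifferentiableAt ℝ D g := fun g hg => by
    rw [show D = fun g => 1 / (1 - g) from funext hD]
    exact (differentiableAt_const _).div ((differentiableAt_const _).sub differentiableAt_id)
      (sub_ne_zero.mpr hg.symm)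
  have hid := hasDerivAt_id' (1/2 : ℝ)
  simp only [hU]
  constructor
  · refine hasDerivAt_split_cost_eq_zero (hid.mul_const lam1 |>.mul_const beta1 |>.add_const _)
      (hid.const_mul lam1 |>.add_const _) ?_ (by ring) (hD_diff _ (by linarith)) (by ring)
    simpa using hid.const_sub 1 |>.const_mul lam1 |>.add_const (lam2 * (1 - 1/2))
  · refine hasDerivAt_split_cost_eq_zero (hid.mul_const lam2 |>.mul_const beta2 |>.const_add _)
      (hid.const_mul lam2 |>.const_add _) ?_ (by ring) (hD_diff _ (by linarith)) (by ring)
    simpa using hid.const_sub 1 |>.const_mul lam2 |>.const_add (lam1 * (1 - 1/2))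

/-- in the two-class two-queue M/M/1 example, both partial
derivatives of the social cost vanish at `(1/2, 1/2)`. -/
theorem social_cost_gradient_zero_at_half
    (lam1 lam2 beta1 beta2 : ℝ)
    (hlam1 : 0 < lam1) (hlam2 : 0 < lam2) (hstab : lam1 + lam2 < 1)
    (hbeta : beta1 > beta2) (hbeta2 : beta2 > 0)
    (D : ℝ → ℝ) (hD : ∀ g, D g = 1 / (1 - g))
    (U : ℝ → ℝ → ℝ)
    (hU : ∀ p1 p2 : ℝ,
      U p1 p2 = (p1 * lam1 * beta1 + p2 * lam2 * beta2) *
              (D (lam1 * p1 + lam2 * p2) -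
               D (lam1 * (1 - p1) + lam2 * (1 - p2))) +
            (lam1 * beta1 + lam2 * beta2) *
              D (lam1 * (1 - p1) + lam2 * (1 - p2))) :
    HasDerivAt (fun p1 => U p1 (1/2)) 0 (1/2) ∧
    HasDerivAt (fun p2 => U (1/2) p2) 0 (1/2) :=
  social_cost_gradient_zero_at_half_general lam1 lam2 beta1 beta2 hstab D hD U hU
end

section
/- No Wardrop equilibrium inversion: let c_1 > c_2 > ... > c_N be admission prices and β_1 > β_2 > ... > β_M > 0 delay sensitivities. Suppose P is a right stochastic routing matrix satisfying the Wardrop condition: for all i, j, k, if p_{ij} > 0 then c_j + β_i D_j(γ_j) ≤ c_k + β_i D_k(γ_k), where γ_j = Σ_i λ_i p_{ij}. Then for any classes i1 < i2 and queues j1 < j2, it is impossible that p_{i1 j2} > 0 and p_{i2 j1} > 0 simultaneously. -/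
open scoped BigOperators

/-- at a Wardrop equilibrium there is no inversion: a more
delay-sensitive class cannot use a cheaper queue while a less sensitive class
simultaneously uses a more expensive queue. -/
theorem wardrop_no_inversion
    {M N : ℕ} (lam beta : Fin M → ℝ) (c : Fin N → ℝ) (D : Fin N → ℝ → ℝ)
    (hlam : ∀ i, 0 < lam i)
    (hbeta_pos : ∀ i, 0 < beta i)
    (hbeta_anti : StrictAnti beta)
    (hc_anti : StrictAnti c)
    (P : Fin M → Fin N → ℝ) (hP : IsRoutingMatrix P)
    (hwardrop : ∀ (i : Fin M) (j k : Fin N), 0 < P i j →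
      c j + beta i * D j (flow lam P j) ≤ c k + beta i * D k (flow lam P k))
    (i1 i2 : Fin M) (hi : i1 < i2) (j1 j2 : Fin N) (hj : j1 < j2) :
    ¬(0 < P i1 j2 ∧ 0 < P i2 j1) := by
  rintro ⟨h1, h2⟩
  have w1 := hwardrop i1 j2 j1 h1
  have w2 := hwardrop i2 j1 j2 h2
  have hb : beta i2 < beta i1 := hbeta_anti hi
  have hb2 : 0 < beta i2 := hbeta_pos i2
  have hcc : c j2 < c j1 := hc_anti hj
  nlinarith [mul_nonneg hb2.le (sub_nonneg.mpr w1)]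
end

section
/- Structure of Wardrop equilibria: let P^W be a routing matrix satisfying the Wardrop condition with admission prices c_1 > c_2 > ... > c_N and sensitivities β_1 > ... > β_M > 0. Then there exist indices 1 ≤ n_1 ≤ n_2 ≤ ... ≤ n_M ≤ N such that p^W_{ij} = 0 whenever j ∉ {n_{i−1}, ..., n_i} (with n_0 = 1); i.e., each class uses a consecutive block of queues, more delay-sensitive classes using lower-indexed (higher-priced) queues. -/
open scoped BigOperators

/-- any Wardrop equilibrium has a block structure: class `i`
(1-based) uses only queues with 1-based index in `[n_{i-1}, n_i]`, with `n_0 = 1`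
and `n_1 ≤ … ≤ n_M ≤ N`. -/
theorem wardrop_block_structure
    {M N : ℕ} (lam beta : Fin M → ℝ) (c : Fin N → ℝ) (D : Fin N → ℝ → ℝ)
    (hlam : ∀ i, 0 < lam i)
    (hbeta_pos : ∀ i, 0 < beta i)
    (hbeta_anti : StrictAnti beta)
    (hc_anti : StrictAnti c)
    (P : Fin M → Fin N → ℝ) (hP : IsRoutingMatrix P)
    (hwardrop : ∀ (i : Fin M) (j k : Fin N), 0 < P i j →
      c j + beta i * D j (flow lam P j) ≤ c k + beta i * D k (flow lam P k)) :
    ∃ n : ℕ → ℕ, n 0 = 1 ∧ (∀ k, n k ≤ n (k + 1)) ∧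
      (∀ k, 1 ≤ k → k ≤ M → 1 ≤ n k ∧ n k ≤ N) ∧
      (∀ (i : Fin M) (j : Fin N),
        (j.val + 1 < n i.val ∨ n (i.val + 1) < j.val + 1) → P i j = 0) := by
  classical
  obtain ⟨hPnn, hPsum⟩ := hP
  -- no inversion lemma
  have noinv : ∀ (i1 i2 : Fin M) (j1 j2 : Fin N), i1 < i2 → j1 < j2 →
      0 < P i1 j2 → 0 < P i2 j1 → False := by
    intro i1 i2 j1 j2 hi hj h12 h21
    have w1 := hwardrop i1 j2 j1 h12
    have w2 := hwardrop i2 j1 j2 h21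
    have hc : c j2 < c j1 := hc_anti hj
    have hb : beta i2 < beta i1 := hbeta_anti hi
    have hb2 := hbeta_pos i2
    set d1 := D j1 (flow lam P j1) with hd1
    set d2 := D j2 (flow lam P j2) with hd2
    have hd : 0 < d2 - d1 := by nlinarith
    nlinarith
  have hne : ∀ i : Fin M, (Finset.univ.filter (fun j => 0 < P i j)).Nonempty := by
    intro i
    rw [Finset.filter_nonempty_iff]
    by_contra h
    push_neg at h
    have hz : ∑ j, P i j = 0 :=
      Finset.sum_eq_zero (fun j _ =>
        le_antisymm (h j (Finset.mem_univ j)) (hPnn i j))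
    rw [hPsum i] at hz
    norm_num at hz
  set m : Fin M → Fin N :=
    fun i => (Finset.univ.filter (fun j => 0 < P i j)).max' (hne i) with hm
  have hmem : ∀ i, 0 < P i (m i) := by
    intro i
    have := Finset.max'_mem (Finset.univ.filter (fun j => 0 < P i j)) (hne i)
    simpa using this
  have hmax : ∀ i j, 0 < P i j → j ≤ m i := by
    intro i j hj
    exact Finset.le_max' _ j (by simpa using hj)
  -- cross lemma: every queue used by a higher class is ≥ max queue of lower class
  have hcross : ∀ (i1 i2 : Fin M) (j : Fin N), i1 < i2 → 0 < P i2 j → m i1 ≤ j := by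
    intro i1 i2 j hi hj
    by_contra h
    push_neg at h
    exact noinv i1 i2 j (m i1) hi h (hmem i1) hj
  have mmono : ∀ i1 i2 : Fin M, i1 ≤ i2 → m i1 ≤ m i2 := by
    intro i1 i2 h
    rcases eq_or_lt_of_le h with rfl | hlt
    · exact le_refl _
    · exact hcross i1 i2 (m i2) hlt (hmem i2)
  refine ⟨fun k => if h : 0 < M ∧ 0 < k then
      (m ⟨min (k-1) (M-1), by omega⟩).val + 1 else 1, ?_, ?_, ?_, ?_⟩
  · simp
  · intro k
    dsimp only
    by_cases hM : 0 < M
    · by_cases hk : 0 < k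
      · rw [dif_pos ⟨hM, hk⟩, dif_pos ⟨hM, by omega⟩]
        have : m ⟨min (k-1) (M-1), by omega⟩ ≤ m ⟨min (k+1-1) (M-1), by omega⟩ := by
          apply mmono
          simp only [Fin.mk_le_mk]
          omega
        omega
      · simp only [Nat.not_lt, Nat.le_zero] at hk
        subst hk
        rw [dif_neg (by omega), dif_pos ⟨hM, by omega⟩]
        omega
    · rw [dif_neg (by omega), dif_neg (by omega)]
  · intro k hk1 hkM
    dsimp only
    have hM : 0 < M := by omega
    rw [dif_pos ⟨hM, by omega⟩]
    have := (m ⟨min (k-1) (M-1), by omega⟩).isLt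
    omega
  · intro i j hcase
    dsimp only at hcase
    have hM : 0 < M := i.pos
    by_contra hne0
    have hpos : 0 < P i j := lt_of_le_of_ne (hPnn i j) (Ne.symm hne0)
    rcases hcase with hlo | hhi
    · -- j + 1 < n i.val
      by_cases hi0 : 0 < i.val
      · rw [dif_pos ⟨hM, hi0⟩] at hlo
        set i' : Fin M := ⟨min (i.val - 1) (M-1), by omega⟩ with hi'
        have hi'lt : i' < i := by
          simp only [hi', Fin.mk_lt_mk, Fin.lt_def]
          omega
        have := hcross i' i j hi'lt hpos
        have hji' : (m i').val ≤ j.val := this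
        omega
      · rw [dif_neg (by omega)] at hlo
        omega
    · rw [dif_pos ⟨hM, by omega⟩] at hhi
      have hmin : min (i.val + 1 - 1) (M-1) = i.val := by omega
      have hle := hmax i j hpos
      have : (⟨min (i.val + 1 - 1) (M-1), by omega⟩ : Fin M) = i := by
        have := i.isLt
        ext
        simp only []
        omega
      rw [this] at hhi
      have : j.val ≤ (m i).val := hle
      omega
end

section
/- Continuum-class structure (exchange/swap inequality): let F be a probability distribution on ℝ₊ and K, K' kernels from ℝ₊ to {1,...,N} (K(β,·) a probability vector for each β). Suppose β_1 > β_2 > 0 and K' is obtained from K by swapping equal F-masses ε > 0 of traffic with sensitivity ≥ β_1 from queue i to queue j and traffic with sensitivity ≤ β_2 from queue j to queue i (leaving total flows γ_i, γ_j unchanged). If D_i(γ_i) > D_j(γ_j), then U(K') < U(K), where U(K) = λ Σ_n ∫ β K(β,n) D_n(γ_n) dF(β). -/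
open scoped BigOperators
open MeasureTheory Set

/-- Flow into queue `n` under routing kernel `K`. -/
noncomputable def ctsFlow {N : ℕ} (lamTot : ℝ) (F : Measure ℝ)
    (K : ℝ → Fin N → ℝ) (n : Fin N) : ℝ :=
  lamTot * ∫ b, K b n ∂F

/-- Social cost of routing kernel `K`. -/
noncomputable def ctsCost {N : ℕ} (lamTot : ℝ) (F : Measure ℝ)
    (D : Fin N → ℝ → ℝ) (K : ℝ → Fin N → ℝ) : ℝ :=
  lamTot * ∑ n, ∫ b, b * K b n * D n (ctsFlow lamTot F K n) ∂F

/-- swapping equal masses of high-sensitivity traffic from the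
slower queue `i` to the faster queue `j` (and low-sensitivity traffic back)
strictly decreases the social cost, when `D_i(γ_i) > D_j(γ_j)`. -/
theorem continuum_swap_decreases_cost
    {N : ℕ} (lamTot : ℝ) (hlam : 0 < lamTot)
    (F : Measure ℝ) [IsProbabilityMeasure F]
    (D : Fin N → ℝ → ℝ)
    (K K' : ℝ → Fin N → ℝ)
    (hK_nonneg : ∀ b n, 0 ≤ K b n) (hK_sum : ∀ b, ∑ n, K b n = 1)
    (hK'_nonneg : ∀ b n, 0 ≤ K' b n) (hK'_sum : ∀ b, ∑ n, K' b n = 1)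
    (hKint : ∀ n, Integrable (fun b => K b n) F ∧
      Integrable (fun b => b * K b n) F)
    (hK'int : ∀ n, Integrable (fun b => K' b n) F ∧
      Integrable (fun b => b * K' b n) F)
    (i j : Fin N) (hij : i ≠ j)
    (beta1 beta2 : ℝ) (hb : beta1 > beta2) (hb2 : beta2 > 0)
    (A B : Set ℝ) (hA : MeasurableSet A) (hB : MeasurableSet B)
    (hAsub : A ⊆ Ici beta1) (hBsub : B ⊆ Icc 0 beta2)
    (eps : ℝ) (heps : 0 < eps)
    (hAmass : ∫ b, A.indicator (fun b => K b i) b ∂F = eps)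
    (hBmass : ∫ b, B.indicator (fun b => K b j) b ∂F = eps)
    -- the swap: move the `A`-mass of queue `i` to queue `j` and the
    -- `B`-mass of queue `j` to queue `i`
    (hK'i : ∀ b, K' b i = K b i - A.indicator (fun b => K b i) b
                          + B.indicator (fun b => K b j) b)
    (hK'j : ∀ b, K' b j = K b j + A.indicator (fun b => K b i) b
                          - B.indicator (fun b => K b j) b)
    (hK'other : ∀ b n, n ≠ i → n ≠ j → K' b n = K b n)
    (hDelay : D i (ctsFlow lamTot F K i) > D j (ctsFlow lamTot F K j)) :
    ctsCost lamTot F D K' < ctsCost lamTot F D K := by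
  classical
  have hKi_int := (hKint i).1
  have hKj_int := (hKint j).1
  have hbKi_int := (hKint i).2
  have hbKj_int := (hKint j).2
  have hsplit : ∀ (f g h : ℝ → ℝ), Integrable f F → Integrable g F → Integrable h F →
      ∫ b, (f b - g b + h b) ∂F = (∫ b, f b ∂F) - (∫ b, g b ∂F) + ∫ b, h b ∂F := by
    intro f g h hf hg hh
    calc ∫ b, (f b - g b + h b) ∂F
        = ∫ b, ((fun b => f b - g b) b + h b) ∂F := rfl
      _ = (∫ b, f b - g b ∂F) + ∫ b, h b ∂F := integral_add (hf.sub hg) hh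
      _ = (∫ b, f b ∂F) - (∫ b, g b ∂F) + ∫ b, h b ∂F := by
          rw [integral_sub hf hg]
  have hfA_int : Integrable (fun b => A.indicator (fun b => K b i) b) F :=
    hKi_int.indicator hA
  have hfB_int : Integrable (fun b => B.indicator (fun b => K b j) b) F :=
    hKj_int.indicator hB
  have hgA_eq : ∀ b : ℝ, b * A.indicator (fun b => K b i) b
      = A.indicator (fun b => b * K b i) b := by
    intro b; by_cases hbA : b ∈ A <;> simp [hbA]
  have hgB_eq : ∀ b : ℝ, b * B.indicator (fun b => K b j) b
      = B.indicator (fun b => b * K b j) b := by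
    intro b; by_cases hbB : b ∈ B <;> simp [hbB]
  have hgA_int : Integrable (fun b => A.indicator (fun b => b * K b i) b) F :=
    hbKi_int.indicator hA
  have hgB_int : Integrable (fun b => B.indicator (fun b => b * K b j) b) F :=
    hbKj_int.indicator hB
  set SA := ∫ b, A.indicator (fun b => b * K b i) b ∂F with hSAdef
  set SB := ∫ b, B.indicator (fun b => b * K b j) b ∂F with hSBdef
  -- flows are unchanged
  have hflow : ∀ n, ctsFlow lamTot F K' n = ctsFlow lamTot F K n := by
    intro n
    by_cases hni : n = i
    · subst hni
      have h0 : ∫ b, K' b n ∂F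
          = ∫ b, (K b n - A.indicator (fun b => K b n) b
              + B.indicator (fun b => K b j) b) ∂F :=
        integral_congr_ae (Filter.Eventually.of_forall fun b => hK'i b)
      have h1 := hsplit _ _ _ hKi_int hfA_int hfB_int
      unfold ctsFlow
      rw [h0, h1, hAmass, hBmass]
      ring
    · by_cases hnj : n = j
      · subst hnj
        have h0 : ∫ b, K' b n ∂F
            = ∫ b, (K b n - B.indicator (fun b => K b n) b
                + A.indicator (fun b => K b i) b) ∂F := by
          refine integral_congr_ae (Filter.Eventually.of_forall fun b => ?_)
          show K' b n = K b n - B.indicator (fun b => K b n) b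
              + A.indicator (fun b => K b i) b
          rw [hK'j b]; ring
        have h1 := hsplit _ _ _ hKj_int hfB_int hfA_int
        unfold ctsFlow
        rw [h0, h1, hAmass, hBmass]
        ring
      · unfold ctsFlow
        congr 1
        exact integral_congr_ae (Filter.Eventually.of_forall fun b => hK'other b n hni hnj)
  set c : Fin N → ℝ := fun n => D n (ctsFlow lamTot F K n) with hc
  have eA : ∀ r : ℝ, ∫ b, A.indicator (fun b => b * K b i) b * r ∂F = SA * r := by
    intro r; rw [integral_mul_const]
  have eB : ∀ r : ℝ, ∫ b, B.indicator (fun b => b * K b j) b * r ∂F = SB * r := by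
    intro r; rw [integral_mul_const]
  -- per-queue term change
  have hterm : ∀ n, (∫ b, b * K' b n * c n ∂F)
      = (∫ b, b * K b n * c n ∂F)
        + ((if n = i then (SB - SA) * c i else 0)
           + (if n = j then (SA - SB) * c j else 0)) := by
    intro n
    by_cases hni : n = i
    · subst hni
      have hnj : ¬ n = j := hij
      have e1 : (∫ b, b * K' b n * c n ∂F)
          = ∫ b, (b * K b n * c n
              - A.indicator (fun b => b * K b n) b * c n
              + B.indicator (fun b => b * K b j) b * c n) ∂F := by
        refine integral_congr_ae (Filter.Eventually.of_forall fun b => ?_)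
        show b * K' b n * c n = b * K b n * c n
            - A.indicator (fun b => b * K b n) b * c n
            + B.indicator (fun b => b * K b j) b * c n
        rw [hK'i b, ← hgA_eq, ← hgB_eq]; ring
      rw [e1, hsplit _ _ _ (hbKi_int.mul_const _) (hgA_int.mul_const _)
        (hgB_int.mul_const _), eA, eB]
      rw [if_pos rfl, if_neg hnj]
      ring
    · by_cases hnj : n = j
      · subst hnj
        have e1 : (∫ b, b * K' b n * c n ∂F)
            = ∫ b, (b * K b n * c n
                - B.indicator (fun b => b * K b n) b * c n
                + A.indicator (fun b => b * K b i) b * c n) ∂F := by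
          refine integral_congr_ae (Filter.Eventually.of_forall fun b => ?_)
          show b * K' b n * c n = b * K b n * c n
              - B.indicator (fun b => b * K b n) b * c n
              + A.indicator (fun b => b * K b i) b * c n
          rw [hK'j b, ← hgA_eq, ← hgB_eq]; ring
        rw [e1, hsplit _ _ _ (hbKj_int.mul_const _) (hgB_int.mul_const _)
          (hgA_int.mul_const _), eA, eB]
        rw [if_neg hni, if_pos rfl]
        ring
      · rw [if_neg hni, if_neg hnj, add_zero, add_zero]
        refine integral_congr_ae (Filter.Eventually.of_forall fun b => ?_)
        show b * K' b n * c n = b * K b n * c n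
        rw [hK'other b n hni hnj]
  -- bounds on SA, SB
  have hSA_ge : beta1 * eps ≤ SA := by
    have h1 : beta1 * eps = ∫ b, beta1 * A.indicator (fun b => K b i) b ∂F := by
      rw [integral_const_mul, hAmass]
    rw [h1, hSAdef]
    refine integral_mono (hfA_int.const_mul beta1) hgA_int fun b => ?_
    by_cases hbA : b ∈ A
    · simp only [Set.indicator_of_mem hbA]
      exact mul_le_mul_of_nonneg_right (hAsub hbA) (hK_nonneg b i)
    · simp [Set.indicator_of_notMem hbA]
  have hSB_le : SB ≤ beta2 * eps := by
    have h1 : beta2 * eps = ∫ b, beta2 * B.indicator (fun b => K b j) b ∂F := by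
      rw [integral_const_mul, hBmass]
    rw [h1, hSBdef]
    refine integral_mono hgB_int (hfB_int.const_mul beta2) fun b => ?_
    by_cases hbB : b ∈ B
    · simp only [Set.indicator_of_mem hbB]
      exact mul_le_mul_of_nonneg_right (hBsub hbB).2 (hK_nonneg b j)
    · simp [Set.indicator_of_notMem hbB]
  have hSAB : SB < SA := by nlinarith
  -- assemble the cost difference
  have hcost' : ctsCost lamTot F D K'
      = ctsCost lamTot F D K + lamTot * ((SB - SA) * c i + (SA - SB) * c j) := by
    unfold ctsCost
    simp only [hflow]
    rw [Finset.sum_congr rfl (fun n _ => hterm n), Finset.sum_add_distrib,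
      Finset.sum_add_distrib]
    simp only [Finset.sum_ite_eq' Finset.univ, Finset.mem_univ, if_pos]
    ring
  have hci : c j < c i := hDelay
  have hΔ : (SB - SA) * c i + (SA - SB) * c j < 0 := by nlinarith
  rw [hcost']
  nlinarith
end
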